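/- Let D be a torsion-free abelian group such that every short exact sequence 0 → D → X → ℚ → 0 of abelian groups splits. Then every short exact sequence 0 → D →φ B →ψ C → 0 of abelian groups in which φ(D) is a pure subgroup of B splits: there exists a group homomorphism s : C → B with ψ ∘ s = id_C. (In other words, a torsion-free cotorsion abelian group is algebraically compact.) -/

import Mathlib

/-!
Embed `D` in its divisible hull `E = ℚ ⊗ D` and extend the inclusion to `f : B → E`. Modulo `D`,
`f` gives a map `B → E/D` that kills `D` and, by purity, every element whose image in `C` is
torsion; as `E/D` is divisible, it factors through the `ℚ`-vector space `ℚ ⊗ C`. Cotorsion lets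
homomorphisms from `ℚ`, hence from any `ℚ`-vector space, into `E/D` lift to `E`; subtracting such
a lift from `f` gives a map `B → E` with values in `D` that retracts the inclusion.
-/

universe u

open TensorProduct

section RatModule

variable {W : Type*} [AddCommGroup W] [Module ℚ W]

lemma eq_zero_of_isOfFinAddOrder_of_ratModule {w : W} (hw : IsOfFinAddOrder w) : w = 0 := by
  obtain ⟨n, hn, hnw⟩ := isOfFinAddOrder_iff_nsmul_eq_zero.mp hw
  rw [← Nat.cast_smul_eq_nsmul ℚ] at hnw
  exact (smul_eq_zero.mp hnw).resolve_left (by exact_mod_cast hn.ne')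

lemma Module.Baer.int_of_surjective_of_ratModule {T : Type*} [AddCommGroup T] (π : W →+ T)
    (hπ : Function.Surjective π) : Module.Baer ℤ T := by
  let : DivisibleBy W ℕ := divisibleByOfSMulRightSurj W ℕ fun {n} hn w =>
    ⟨(n : ℚ)⁻¹ • w, show n • (n : ℚ)⁻¹ • w = w by rw [← Nat.cast_smul_eq_nsmul ℚ, smul_smul,
      mul_inv_cancel₀ (Nat.cast_ne_zero.mpr hn), one_smul]⟩
  let : DivisibleBy T ℕ := hπ.divisibleBy π fun w n => map_nsmul π n w
  let : DivisibleBy T ℤ := AddGroup.divisibleByIntOfDivisibleByNat T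
  exact Module.Baer.of_divisible T

end RatModule

lemma TensorProduct.one_tmul_eq_zero_iff_isOfFinAddOrder {A : Type*} [AddCommGroup A] (a : A) :
    (1 : ℚ) ⊗ₜ[ℤ] a = 0 ↔ IsOfFinAddOrder a := by
  rw [← TensorProduct.mk_apply, IsLocalizedModule.eq_zero_iff (nonZeroDivisors ℤ),
    isOfFinAddOrder_iff_zsmul_eq_zero]
  constructor
  · rintro ⟨⟨n, hn⟩, hna⟩
    exact ⟨n, mem_nonZeroDivisors_iff_ne_zero.mp hn, hna⟩
  · rintro ⟨n, hn, hna⟩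
    exact ⟨⟨n, mem_nonZeroDivisors_iff_ne_zero.mpr hn⟩, hna⟩

lemma AddMonoidHom.exists_comp_eq_of_surjective {B C M : Type*} [AddGroup B] [AddGroup C]
    [AddGroup M] (ψ : B →+ C) (hψ : Function.Surjective ψ) (g : B →+ M) (h : ψ.ker ≤ g.ker) :
    ∃ k : C →+ M, k.comp ψ = g :=
  ⟨_, ψ.liftOfRightInverse_comp _ (Function.rightInverse_surjInv hψ) ⟨g, h⟩⟩

lemma Module.Baer.exists_comp_eq_of_ker_le {X Y T : Type*} [AddCommGroup X] [AddCommGroup Y]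
    [AddCommGroup T] (hT : Module.Baer ℤ T) (f : X →+ Y) (g : X →+ T) (h : f.ker ≤ g.ker) :
    ∃ k : Y →+ T, k.comp f = g := by
  obtain ⟨g', hg'⟩ := f.rangeRestrict.exists_comp_eq_of_surjective f.rangeRestrict_surjective g
    (by rwa [AddMonoidHom.ker_rangeRestrict])
  obtain ⟨k, hk⟩ := hT.extension_property_addMonoidHom f.range.subtype Subtype.val_injective g'
  exact ⟨k, by rw [← hg', ← hk]; rfl⟩

lemma exists_section_of_retraction {D B C : Type*} [AddCommGroup D] [AddCommGroup B]
    [AddCommGroup C] (φ : D →+ B) (ψ : B →+ C) (hψ : Function.Surjective ψ)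
    (hex : ∀ b : B, ψ b = 0 ↔ b ∈ φ.range) (r : B →+ D) (hr : r.comp φ = .id D) :
    ∃ s : C →+ B, ψ.comp s = .id C := by
  have hker : ψ.ker ≤ (.id B - φ.comp r).ker := by
    intro b hb
    obtain ⟨d, rfl⟩ := (hex b).mp hb
    simp [← AddMonoidHom.comp_apply r φ, hr]
  obtain ⟨s, hs⟩ := ψ.exists_comp_eq_of_surjective hψ _ hker
  refine ⟨s, AddMonoidHom.ext fun c => ?_⟩
  obtain ⟨b, rfl⟩ := hψ c
  have hφr : ψ (φ (r b)) = 0 := (hex _).mpr ⟨r b, rfl⟩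
  simp [← AddMonoidHom.comp_apply s ψ, hs, hφr]

def IsCotorsion (D : Type u) [AddCommGroup D] : Prop :=
  ∀ (X : Type u) (_ : AddCommGroup X) (ι : D →+ X) (π : X →+ ℚ),
    Function.Injective ι → Function.Surjective π → (∀ x : X, π x = 0 ↔ x ∈ ι.range) →
    ∃ s : ℚ →+ X, π.comp s = AddMonoidHom.id ℚ

namespace IsCotorsion

variable {D E T : Type u} [AddCommGroup D] [AddCommGroup E] [AddCommGroup T]

lemma exists_lift_of_rat (hD : IsCotorsion D) {ι : D →+ E} {π : E →+ T}
    (hι : Function.Injective ι) (hπ : Function.Surjective π)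
    (hex : ∀ e : E, π e = 0 ↔ e ∈ ι.range) (g : ℚ →+ T) : ∃ k : ℚ →+ E, π.comp k = g := by
  -- the pullback of `π` along `g` is an extension of `D` by `ℚ`
  let X := (g.comp (.fst ℚ E) - π.comp (.snd ℚ E)).ker
  let ι' : D →+ X := ((AddMonoidHom.inr ℚ E).comp ι).codRestrict X fun d => by
    simp [X, (hex _).mpr ⟨d, rfl⟩]
  have hι' : Function.Injective ι' := fun d d' h => hι congr(($h).1.2)
  have hπ' : Function.Surjective ((AddMonoidHom.fst ℚ E).comp X.subtype) := fun s => by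
    obtain ⟨e, he⟩ := hπ (g s)
    exact ⟨⟨(s, e), AddMonoidHom.mem_ker.mpr (by simp [he])⟩, rfl⟩
  have hex' : ∀ x : X, (AddMonoidHom.fst ℚ E).comp X.subtype x = 0 ↔ x ∈ ι'.range := by
    rintro ⟨⟨s, e⟩, hx⟩
    have hx' : g s = π e := sub_eq_zero.mp hx
    constructor
    · rintro (rfl : s = 0)
      obtain ⟨d, rfl⟩ := (hex e).mp (by rw [← hx', map_zero])
      exact ⟨d, rfl⟩
    · rintro ⟨d, hd⟩
      rw [← hd]
      rfl
  obtain ⟨sec, hsec⟩ := hD X inferInstance ι' _ hι' hπ' hex'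
  refine ⟨(AddMonoidHom.snd ℚ E).comp (X.subtype.comp sec), AddMonoidHom.ext fun s => ?_⟩
  have h1 : (sec s : ℚ × E).1 = s := congr($hsec s)
  have h2 : g (sec s : ℚ × E).1 - π (sec s : ℚ × E).2 = 0 := (sec s).2
  rw [h1, sub_eq_zero] at h2
  exact h2.symm

lemma exists_lift_of_ratModule (hD : IsCotorsion D) {ι : D →+ E} {π : E →+ T}
    (hι : Function.Injective ι) (hπ : Function.Surjective π)
    (hex : ∀ e : E, π e = 0 ↔ e ∈ ι.range) {W : Type*} [AddCommGroup W] [Module ℚ W]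
    (g : W →+ T) : ∃ k : W →+ E, π.comp k = g := by
  let b := Module.Basis.ofVectorSpace ℚ W
  choose k hk using fun i => hD.exists_lift_of_rat hι hπ hex
    (g.comp (LinearMap.toSpanSingleton ℚ W (b i)).toAddMonoidHom)
  refine ⟨(Finsupp.liftAddHom k).comp b.repr.toAddMonoidHom, ?_⟩
  suffices π.comp (Finsupp.liftAddHom k) = g.comp b.repr.symm.toAddMonoidHom by
    ext w
    simpa using congr($this (b.repr w))
  refine Finsupp.addHom_ext fun i s => ?_
  simpa using congr($(hk i) s)

end IsCotorsion

section Retraction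

variable {D B C E : Type*} [AddCommGroup D] [AddCommGroup B] [AddCommGroup C] [AddCommGroup E]

lemma exists_isOfFinAddOrder_sub_of_pure (φ : D →+ B) (ψ : B →+ C)
    (hex : ∀ b : B, ψ b = 0 ↔ b ∈ φ.range)
    (hpure : ∀ n : ℕ, 0 < n → ∀ b ∈ φ.range, (∃ x : B, n • x = b) → ∃ y ∈ φ.range, n • y = b)
    {b : B} (hb : IsOfFinAddOrder (ψ b)) : ∃ d : D, IsOfFinAddOrder (b - φ d) := by
  obtain ⟨n, hn, hnb⟩ := isOfFinAddOrder_iff_nsmul_eq_zero.mp hb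
  obtain ⟨_, ⟨d, rfl⟩, hd⟩ := hpure n hn (n • b) ((hex _).mp (by rw [map_nsmul, hnb])) ⟨b, rfl⟩
  exact ⟨d, isOfFinAddOrder_iff_nsmul_eq_zero.mpr ⟨n, hn, by rw [smul_sub, hd, sub_self]⟩⟩

lemma exists_retraction_of_map_mem_range {φ : D →+ B} {ι : D →+ E} (hι : Function.Injective ι)
    (g : B →+ E) (hg : ∀ b, g b ∈ ι.range) (hgφ : g.comp φ = ι) :
    ∃ r : B →+ D, r.comp φ = .id D := by
  refine ⟨(AddMonoidHom.ofInjective hι).symm.toAddMonoidHom.comp (g.codRestrict ι.range hg),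
    AddMonoidHom.ext fun d => ?_⟩
  simp only [AddMonoidHom.comp_apply, AddEquiv.coe_toAddMonoidHom, AddMonoidHom.id_apply,
    AddEquiv.symm_apply_eq]
  exact Subtype.ext (by simp [AddMonoidHom.ofInjective_apply, ← hgφ])

end Retraction

theorem exists_retraction_of_pure {D B C : Type u} [AddCommGroup D] [AddCommGroup B]
    [AddCommGroup C] (hD : ∀ d : D, IsOfFinAddOrder d → d = 0) (hcot : IsCotorsion D)
    (φ : D →+ B) (ψ : B →+ C) (hφ : Function.Injective φ)
    (hex : ∀ b : B, ψ b = 0 ↔ b ∈ φ.range)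
    (hpure : ∀ n : ℕ, 0 < n → ∀ b ∈ φ.range, (∃ x : B, n • x = b) → ∃ y ∈ φ.range, n • y = b) :
    ∃ r : B →+ D, r.comp φ = .id D := by
  let ι : D →+ ℚ ⊗[ℤ] D := (TensorProduct.mk ℤ ℚ D 1).toAddMonoidHom
  have hι : Function.Injective ι := (injective_iff_map_eq_zero ι).mpr fun d hd =>
    hD d ((TensorProduct.one_tmul_eq_zero_iff_isOfFinAddOrder d).mp hd)
  let π := QuotientAddGroup.mk' ι.range
  have hπ : Function.Surjective π := QuotientAddGroup.mk'_surjective _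
  have hexι : ∀ e, π e = 0 ↔ e ∈ ι.range := fun _ => QuotientAddGroup.eq_zero_iff _
  obtain ⟨f, hf⟩ := (Module.Baer.int_of_surjective_of_ratModule (.id _)
    Function.surjective_id).extension_property_addMonoidHom φ hφ ι
  let ℓ : C →+ ℚ ⊗[ℤ] C := (TensorProduct.mk ℤ ℚ C 1).toAddMonoidHom
  have hker : (ℓ.comp ψ).ker ≤ (π.comp f).ker := by
    intro b hb
    obtain ⟨d, hd⟩ := exists_isOfFinAddOrder_sub_of_pure φ ψ hex hpure
      ((TensorProduct.one_tmul_eq_zero_iff_isOfFinAddOrder _).mp hb)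
    have hfb : f b = ι d := by
      rw [← sub_eq_zero, ← congr($hf d)]
      simpa using eq_zero_of_isOfFinAddOrder_of_ratModule (f.isOfFinAddOrder hd)
    exact (hexι _).mpr ⟨d, hfb.symm⟩
  obtain ⟨H, hH⟩ := (Module.Baer.int_of_surjective_of_ratModule π hπ).exists_comp_eq_of_ker_le
    (ℓ.comp ψ) (π.comp f) hker
  obtain ⟨K, hK⟩ := hcot.exists_lift_of_ratModule hι hπ hexι H
  refine exists_retraction_of_map_mem_range hι (f - K.comp (ℓ.comp ψ)) (fun b => ?_) ?_
  · rw [← hexι, ← AddMonoidHom.comp_apply π, AddMonoidHom.comp_sub, ← AddMonoidHom.comp_assoc, hK,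
      hH, sub_self, AddMonoidHom.zero_apply]
  · ext d
    simp [← hf, (hex _).mpr ⟨d, rfl⟩]

/-- A torsion-free cotorsion group is algebraically compact: every pure extension of it
splits. -/
theorem pure_extension_splits_of_torsionFree_cotorsion
    (D : Type u) [AddCommGroup D]
    -- D is torsion-free:
    (hD : ∀ d : D, IsOfFinAddOrder d → d = 0)
    -- D is cotorsion: every extension of D by ℚ splits:
    (hcot : ∀ (X : Type u) (_ : AddCommGroup X) (ι : D →+ X) (π : X →+ ℚ),
      Function.Injective ι → Function.Surjective π →
      (∀ x : X, π x = 0 ↔ x ∈ ι.range) →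
      ∃ s : ℚ →+ X, π.comp s = AddMonoidHom.id ℚ) :
    -- every pure extension of D splits:
    ∀ (B C : Type u) (_ : AddCommGroup B) (_ : AddCommGroup C)
      (φ : D →+ B) (ψ : B →+ C),
      Function.Injective φ → Function.Surjective ψ →
      (∀ b : B, ψ b = 0 ↔ b ∈ φ.range) →
      (∀ n : ℕ, 0 < n → ∀ b ∈ φ.range, (∃ x : B, n • x = b) → ∃ y ∈ φ.range, n • y = b) →
      ∃ s : C →+ B, ψ.comp s = AddMonoidHom.id C := by
  intro B C _ _ φ ψ hφ hψ hex hpure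
  obtain ⟨r, hr⟩ := exists_retraction_of_pure hD hcot φ ψ hφ hex hpure
  exact exists_section_of_retraction φ ψ hψ hex r hr
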